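/- arXiv:1804.09961 — 5 statements merged into one kernel-verified Lean document; each statement's English description precedes it below -/
import Mathlib

section
/- Suppose a2 > 0, a3 > 0, D > 0, d i > 0 for every miner i, and b i ≥ 0 for every miner i, and c is any real constant. Then the social welfare function S is submodular: for all finite sets A ⊆ B ⊆ N and every u ∈ N with u ∉ B, S(A ∪ {u}) − S(A) ≥ S(B ∪ {u}) − S(B). -/
open Finset Real

/-- Submodularity of the blockchain social-welfare function
`S(M) = (a1 − a2·exp(a3·(Σ_{j∈M} d j)/D))·(Σ_{i∈M} d i · b i)/D − c·(Σ_{i∈M} d i)`. -/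
theorem social_welfare_submodular {ι : Type*} [DecidableEq ι] (N : Finset ι)
    (d b : ι → ℝ) (a1 a2 a3 c D : ℝ)
    (ha2 : 0 < a2) (ha3 : 0 < a3) (hD : 0 < D)
    (hd : ∀ i ∈ N, 0 < d i) (hb : ∀ i ∈ N, 0 ≤ b i)
    (S : Finset ι → ℝ)
    (hS : ∀ M : Finset ι,
      S M = (a1 - a2 * Real.exp (a3 * (∑ j ∈ M, d j) / D)) * (∑ i ∈ M, d i * b i) / D
              - c * ∑ i ∈ M, d i)
    (A B : Finset ι) (hA : A ⊆ B) (hB : B ⊆ N)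
    (u : ι) (huN : u ∈ N) (huB : u ∉ B) :
    S (B ∪ {u}) - S B ≤ S (A ∪ {u}) - S A := by
  have huA : u ∉ A := fun h => huB (hA h)
  have hdisA : Disjoint A {u} := Finset.disjoint_singleton_right.mpr huA
  have hdisB : Disjoint B {u} := Finset.disjoint_singleton_right.mpr huB
  set sA := ∑ i ∈ A, d i with hsA
  set sB := ∑ i ∈ B, d i with hsB
  set tA := ∑ i ∈ A, d i * b i with htA
  set tB := ∑ i ∈ B, d i * b i with htB
  have hsumA : ∑ i ∈ A ∪ {u}, d i = sA + d u := by
    rw [Finset.sum_union hdisA, Finset.sum_singleton]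
  have hsumB : ∑ i ∈ B ∪ {u}, d i = sB + d u := by
    rw [Finset.sum_union hdisB, Finset.sum_singleton]
  have hsumA' : ∑ i ∈ A ∪ {u}, d i * b i = tA + d u * b u := by
    rw [Finset.sum_union hdisA, Finset.sum_singleton]
  have hsumB' : ∑ i ∈ B ∪ {u}, d i * b i = tB + d u * b u := by
    rw [Finset.sum_union hdisB, Finset.sum_singleton]
  rw [hS (A ∪ {u}), hS (B ∪ {u}), hS A, hS B, hsumA, hsumB, hsumA', hsumB']
  set EA := Real.exp (a3 * sA / D) with hEA
  set EB := Real.exp (a3 * sB / D) with hEB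
  set k := Real.exp (a3 * d u / D) with hk
  have hdu : 0 < d u := hd u huN
  have hbu : 0 ≤ b u := hb u huN
  have ht : 0 ≤ d u * b u := mul_nonneg hdu.le hbu
  have hsAB : sA ≤ sB := Finset.sum_le_sum_of_subset_of_nonneg hA
    (fun i hi _ => (hd i (hB hi)).le)
  have htAB : tA ≤ tB := Finset.sum_le_sum_of_subset_of_nonneg hA
    (fun i hi _ => mul_nonneg (hd i (hB hi)).le (hb i (hB hi)))
  have htA0 : 0 ≤ tA := Finset.sum_nonneg
    (fun i hi => mul_nonneg (hd i (hB (hA hi))).le (hb i (hB (hA hi))))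
  have hEAB : EA ≤ EB := Real.exp_le_exp.mpr (by gcongr)
  have hEA0 : 0 < EA := Real.exp_pos _
  have hk1 : 1 ≤ k := Real.one_le_exp (by positivity)
  have hexpA : Real.exp (a3 * (sA + d u) / D) = EA * k := by
    rw [hEA, hk, ← Real.exp_add]; ring_nf
  have hexpB : Real.exp (a3 * (sB + d u) / D) = EB * k := by
    rw [hEB, hk, ← Real.exp_add]; ring_nf
  rw [hexpA, hexpB, ← htA, ← htB, ← hsA, ← hsB]
  set t := d u * b u with htdef
  have core : (a1 - a2 * (EB * k)) * (tB + t) - (a1 - a2 * EB) * tB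
      ≤ (a1 - a2 * (EA * k)) * (tA + t) - (a1 - a2 * EA) * tA := by
    nlinarith [mul_nonneg (sub_nonneg.mpr hEAB)
        (add_nonneg (mul_nonneg (sub_nonneg.mpr hk1) htA0)
          (mul_nonneg (le_trans zero_le_one hk1) ht)),
      mul_nonneg (mul_nonneg hEA0.le (sub_nonneg.mpr hk1)) (sub_nonneg.mpr htAB),
      mul_nonneg (sub_nonneg.mpr hEAB) (mul_nonneg (sub_nonneg.mpr hk1) (sub_nonneg.mpr htAB))]
  have core' : ((a1 - a2 * (EB * k)) * (tB + t) - (a1 - a2 * EB) * tB) / D ≤ ((a1 - a2 * (EA * k)) * (tA + t) - (a1 - a2 * EA) * tA) / D := by gcongr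
  rw [sub_div, sub_div] at core'
  linarith
end

section
/- Fix a finite set M of miners with demands d j > 0 and bids b j ≥ 0 for j ∈ M, a fixed bid β > 0 for a miner i ∉ M, and real constants a2 > 0, a3 > 0, D > 0, c ∈ ℝ, a1 ∈ ℝ. Then the marginal social welfare density of miner i, viewed as a function of its demand z ∈ (0, ∞), namely z ↦ (a2·exp(a3·d_M/D) − a2·exp(a3·(d_M + z)/D))·(Σ_{j∈M} d_j·b_j)/(D·z) + (a1 − a2·exp(a3·(d_M + z)/D))·β/D − c with d_M = Σ_{j∈M} d j, is strictly decreasing on (0, ∞). -/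
open Finset Real Set

lemma slope_exp_mono {t x y : ℝ} (hx : 0 < x) (hxy : x < y) :
    (Real.exp (t * x) - 1) / x ≤ (Real.exp (t * y) - 1) / y := by
  have hy : 0 < y := hx.trans hxy
  have hb : (0:ℝ) ≤ x / y := by positivity
  have ha : (0:ℝ) ≤ 1 - x / y := by
    have : x / y ≤ 1 := by
      rw [div_le_one hy]; linarith
    linarith
  have hconv := convexOn_exp.2 (Set.mem_univ (0:ℝ)) (Set.mem_univ (t * y)) ha hb
    (by ring)
  simp only [smul_eq_mul, mul_zero, zero_add, Real.exp_zero, mul_one] at hconv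
  have harg : x / y * (t * y) = t * x := by field_simp
  rw [harg] at hconv
  rw [div_le_div_iff₀ hx hy]
  have hmul := mul_le_mul_of_nonneg_right hconv hy.le
  have heq : (1 - x / y + x / y * Real.exp (t * y)) * y = y - x + x * Real.exp (t * y) := by
    field_simp
  rw [heq] at hmul
  nlinarith

/-- The marginal social welfare density of miner `i`, viewed as a function of its
demand `z` (with its bid `β > 0` held fixed), is strictly decreasing on `(0, ∞)`. -/
theorem density_strictAnti_in_demand {ι : Type*} [DecidableEq ι]
    (M : Finset ι) (d b : ι → ℝ)
    (hd : ∀ j ∈ M, 0 < d j) (hb : ∀ j ∈ M, 0 ≤ b j)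
    (β : ℝ) (hβ : 0 < β) (a1 a2 a3 c D : ℝ)
    (ha2 : 0 < a2) (ha3 : 0 < a3) (hD : 0 < D) :
    StrictAntiOn (fun z : ℝ =>
      (a2 * Real.exp (a3 * (∑ j ∈ M, d j) / D)
        - a2 * Real.exp (a3 * ((∑ j ∈ M, d j) + z) / D)) * (∑ j ∈ M, d j * b j) / (D * z)
      + (a1 - a2 * Real.exp (a3 * ((∑ j ∈ M, d j) + z) / D)) * β / D - c)
      (Set.Ioi (0 : ℝ)) := by
  set K := ∑ j ∈ M, d j with hK
  set S := ∑ j ∈ M, d j * b j with hS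
  have hS0 : 0 ≤ S := Finset.sum_nonneg fun j hj => mul_nonneg (hd j hj).le (hb j hj)
  set t := a3 / D with ht
  have ht0 : 0 < t := by positivity
  set E := Real.exp (a3 * K / D) with hE
  have hE0 : 0 < E := Real.exp_pos _
  -- g is the rewritten form of f
  set C1 := a2 * E * S / D with hC1
  set C2 := a2 * E * β / D with hC2
  have hC1' : 0 ≤ C1 := by positivity
  have hC2' : 0 < C2 := by positivity
  have hEq : ∀ z ∈ Set.Ioi (0:ℝ),
      (a2 * Real.exp (a3 * K / D) - a2 * Real.exp (a3 * (K + z) / D)) * S / (D * z)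
      + (a1 - a2 * Real.exp (a3 * (K + z) / D)) * β / D - c
      = (a1 * β / D - c) - C1 * ((Real.exp (t * z) - 1) / z) - C2 * Real.exp (t * z) := by
    intro z hz
    have hz0 : (0:ℝ) < z := hz
    have hexp : Real.exp (a3 * (K + z) / D) = E * Real.exp (t * z) := by
      rw [hE, ← Real.exp_add]
      congr 1
      rw [ht]
      field_simp
    rw [hexp, hC1, hC2, ht, hE]
    field_simp [hD.ne', hz0.ne']
    ring
  intro x hx y hy hxy
  have hx0 : (0:ℝ) < x := hx
  have hy0 : (0:ℝ) < y := hy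
  simp only
  rw [hEq x hx, hEq y hy]
  have h1 : C1 * ((Real.exp (t * x) - 1) / x) ≤ C1 * ((Real.exp (t * y) - 1) / y) :=
    mul_le_mul_of_nonneg_left (slope_exp_mono hx0 hxy) hC1'
  have h2 : C2 * Real.exp (t * x) < C2 * Real.exp (t * y) := by
    apply mul_lt_mul_of_pos_left _ hC2'
    exact Real.exp_lt_exp.2 (by nlinarith)
  linarith
end

section
/- Let M be a finite subset of the miner set N, let m' ∈ M and m ∈ N with m ∉ M, and suppose b m > b m' and a1 > a2·exp(a3·q·|M|/D), with q > 0, D > 0. Then swapping m' for m strictly increases the constant-demand social welfare: S_q((M \ {m'}) ∪ {m}) − S_q(M) = (q/D)·(a1 − a2·exp(a3·q·|M|/D))·(b m − b m') > 0. -/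
open Finset Real

/-- Exchange identity for the constant-demand social welfare
`S_q(M) = (q/D)·(a1 − a2·exp(a3·q·|M|/D))·(Σ_{i∈M} b i) − c·q·|M|`:
swapping a winner `m'` for an outside miner `m` with a strictly larger bid
strictly increases the social welfare. -/
theorem constant_demand_exchange {ι : Type*} [DecidableEq ι] (N : Finset ι)
    (b : ι → ℝ) (a1 a2 a3 c q D : ℝ) (hq : 0 < q) (hD : 0 < D)
    (Sq : Finset ι → ℝ)
    (hSq : ∀ M : Finset ι,
      Sq M = q / D * (a1 - a2 * Real.exp (a3 * q * (M.card : ℝ) / D)) * (∑ i ∈ M, b i)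
              - c * q * (M.card : ℝ))
    (M : Finset ι) (hMN : M ⊆ N) (m' : ι) (hm' : m' ∈ M)
    (m : ι) (hmN : m ∈ N) (hm : m ∉ M)
    (hbb : b m' < b m)
    (ha1 : a2 * Real.exp (a3 * q * (M.card : ℝ) / D) < a1) :
    Sq ((M \ {m'}) ∪ {m}) - Sq M
      = q / D * (a1 - a2 * Real.exp (a3 * q * (M.card : ℝ) / D)) * (b m - b m')
    ∧ 0 < Sq ((M \ {m'}) ∪ {m}) - Sq M := by
  have hmne : m ∉ M \ {m'} := fun h => hm (mem_sdiff.mp h).1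
  have hcard : ((M \ {m'}) ∪ {m}).card = M.card := by
    rw [union_comm, ← insert_eq, card_insert_of_notMem hmne,
      card_sdiff_of_subset (by simpa using hm'), card_singleton]
    have := card_pos.mpr ⟨m', hm'⟩
    omega
  have hsum : (∑ i ∈ (M \ {m'}) ∪ {m}, b i) = (∑ i ∈ M, b i) - b m' + b m := by
    rw [union_comm, ← insert_eq, sum_insert hmne, sum_sdiff_eq_sub (by simpa using hm'),
      sum_singleton]
    ring
  have heq : Sq ((M \ {m'}) ∪ {m}) - Sq M
      = q / D * (a1 - a2 * Real.exp (a3 * q * (M.card : ℝ) / D)) * (b m - b m') := by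
    rw [hSq, hSq, hcard, hsum]; ring
  refine ⟨heq, ?_⟩
  rw [heq]
  exact mul_pos (mul_pos (div_pos hq hD) (sub_pos.mpr ha1)) (sub_pos.mpr hbb)
end

section
/- Let n ∈ ℕ and let the bids b : Fin n → ℝ be sorted in descending order (i.e., i ≤ j implies b i ≥ b j). Let M ⊆ Fin n be any subset, with k = |M|, and suppose a1 ≥ a2·exp(a3·q·k/D), with q > 0, D > 0. Then the prefix consisting of the k highest bidders achieves at least as large social welfare: S_q({i : i < k}) ≥ S_q(M). -/
open Finset Real

lemma fin_strictMono_le_apply {k n : ℕ} {f : Fin k → Fin n} (hf : StrictMono f) :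
    ∀ j : ℕ, ∀ hj : j < k, j ≤ ((f ⟨j, hj⟩ : Fin n) : ℕ)
  | 0, _ => Nat.zero_le _
  | j + 1, hj => by
    have h1 : j < k := lt_trans (Nat.lt_succ_self j) hj
    have h2 := fin_strictMono_le_apply hf j h1
    have h3 := hf (show (⟨j, h1⟩ : Fin k) < ⟨j + 1, hj⟩ from by
      simp [Fin.lt_def])
    simp only [Fin.lt_def] at h3
    omega

/-- Greedy optimality for the constant-demand social welfare: with bids sorted in
descending order, the prefix of the `k = |M|` highest bidders achieves at least as
large social welfare as any subset `M` of cardinality `k`, provided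
`a1 ≥ a2·exp(a3·q·k/D)`. -/
theorem constant_demand_prefix_optimal (n : ℕ) (b : Fin n → ℝ)
    (hsorted : ∀ i j : Fin n, i ≤ j → b j ≤ b i)
    (a1 a2 a3 c q D : ℝ) (hq : 0 < q) (hD : 0 < D)
    (Sq : Finset (Fin n) → ℝ)
    (hSq : ∀ M : Finset (Fin n),
      Sq M = q / D * (a1 - a2 * Real.exp (a3 * q * (M.card : ℝ) / D)) * (∑ i ∈ M, b i)
              - c * q * (M.card : ℝ))
    (M : Finset (Fin n)) (k : ℕ) (hk : k = M.card)
    (ha1 : a2 * Real.exp (a3 * q * (k : ℝ) / D) ≤ a1) :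
    Sq M ≤ Sq (Finset.univ.filter (fun i : Fin n => (i : ℕ) < k)) := by
  have hkn : k ≤ n := hk ▸ (M.card_le_univ.trans_eq (by simp))
  set P : Finset (Fin n) := Finset.univ.filter (fun i : Fin n => (i : ℕ) < k) with hP
  have hPmap : P = Finset.univ.map (Fin.castLEEmb hkn) := by
    ext i
    simp only [hP, Finset.mem_filter, Finset.mem_univ, true_and, Finset.mem_map,
      Fin.castLEEmb_apply]
    constructor
    · intro hi
      exact ⟨⟨(i : ℕ), hi⟩, by ext; simp⟩
    · rintro ⟨j, rfl⟩
      simp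
  have hPcard : P.card = k := by simp [hPmap]
  -- the order embedding enumerating M
  set f := M.orderEmbOfFin hk.symm with hf
  have hMmap : M = Finset.univ.map f.toEmbedding := by
    ext i
    simp only [Finset.mem_map, RelEmbedding.coe_toEmbedding, Finset.mem_univ, true_and]
    constructor
    · intro hi
      have : i ∈ Set.range f := by rw [Finset.range_orderEmbOfFin]; exact hi
      obtain ⟨j, rfl⟩ := this
      exact ⟨j, rfl⟩
    · rintro ⟨j, rfl⟩
      exact Finset.orderEmbOfFin_mem M hk.symm j
  have hsum : (∑ i ∈ M, b i) ≤ ∑ i ∈ P, b i := by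
    rw [hMmap, hPmap, Finset.sum_map, Finset.sum_map]
    apply Finset.sum_le_sum
    intro j _
    apply hsorted
    have := fin_strictMono_le_apply f.strictMono (j : ℕ) j.isLt
    simp only [Fin.mk_val, Fin.eta] at this
    simpa [Fin.le_def] using this
  rw [hSq, hSq, hPcard, ← hk]
  have hC : 0 ≤ q / D * (a1 - a2 * Real.exp (a3 * q * (k : ℝ) / D)) := by
    apply mul_nonneg (le_of_lt (div_pos hq hD))
    linarith
  nlinarith [mul_le_mul_of_nonneg_left hsum hC]
end

section
/- Suppose b j ≥ 0 for every miner j, a2 > 0, a3 > 0, q > 0, D > 0 and c ≥ 0. Let F = {M ⊆ N : q·|M| ≤ D} be the feasible sets. Suppose M* ∈ F maximizes S_q over F, let i ∈ M*, and suppose M₋ᵢ* maximizes S_q over {M ∈ F : i ∉ M}. Then the VCG payment p i = S_q(M₋ᵢ*) − S_q(M* \ {i}) satisfies 0 ≤ p i ≤ (q/D)·(a1 − a2·exp(a3·q·|M*|/D))·b i; that is, winner i's payment is nonnegative and does not exceed its ex-post valuation, so its utility is nonnegative (individual rationality of the CDB auction). -/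
open Finset Real

/-- Individual rationality of the VCG payments in the CDB auction: winner `i`'s
payment `p i = S_q(M₋ᵢ*) − S_q(M* \ {i})` is nonnegative and does not exceed its
ex-post valuation `(q/D)·(a1 − a2·exp(a3·q·|M*|/D))·b i`. -/
theorem cdb_vcg_individually_rational {ι : Type*} [DecidableEq ι] (N : Finset ι)
    (b : ι → ℝ) (hb : ∀ j : ι, 0 ≤ b j)
    (a1 a2 a3 c q D : ℝ) (ha2 : 0 < a2) (ha3 : 0 < a3)
    (hq : 0 < q) (hD : 0 < D) (hc : 0 ≤ c)
    (Sq : Finset ι → ℝ)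
    (hSq : ∀ M : Finset ι,
      Sq M = q / D * (a1 - a2 * Real.exp (a3 * q * (M.card : ℝ) / D)) * (∑ i ∈ M, b i)
              - c * q * (M.card : ℝ))
    (Mstar : Finset ι) (hMstarN : Mstar ⊆ N) (hMstarFeas : q * (Mstar.card : ℝ) ≤ D)
    (hMstarOpt : ∀ M : Finset ι, M ⊆ N → q * (M.card : ℝ) ≤ D → Sq M ≤ Sq Mstar)
    (i : ι) (hi : i ∈ Mstar)
    (Mmi : Finset ι) (hMmiN : Mmi ⊆ N) (hMmiFeas : q * (Mmi.card : ℝ) ≤ D)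
    (hMmi : i ∉ Mmi)
    (hMmiOpt : ∀ M : Finset ι, M ⊆ N → q * (M.card : ℝ) ≤ D → i ∉ M → Sq M ≤ Sq Mmi) :
    0 ≤ Sq Mmi - Sq (Mstar \ {i}) ∧
    Sq Mmi - Sq (Mstar \ {i})
      ≤ q / D * (a1 - a2 * Real.exp (a3 * q * (Mstar.card : ℝ) / D)) * b i := by

  have hcard1 : 1 ≤ Mstar.card := Finset.card_pos.mpr ⟨i, hi⟩
  have hsubN : Mstar \ {i} ⊆ N := Finset.sdiff_subset.trans hMstarN
  have hcard : (Mstar \ {i}).card = Mstar.card - 1 := by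
    rw [Finset.sdiff_singleton_eq_erase, Finset.card_erase_of_mem hi]
  have hcardR : ((Mstar \ {i}).card : ℝ) = (Mstar.card : ℝ) - 1 := by
    rw [hcard, Nat.cast_sub hcard1]; norm_num
  have hfeas : q * ((Mstar \ {i}).card : ℝ) ≤ D := by
    rw [hcardR]
    nlinarith [hMstarFeas]
  have hnotin : i ∉ Mstar \ {i} := by simp
  have hsum : ∑ j ∈ Mstar \ {i}, b j = (∑ j ∈ Mstar, b j) - b i := by
    rw [Finset.sdiff_singleton_eq_erase, Finset.sum_erase_eq_sub hi]
  constructor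
  · have := hMmiOpt (Mstar \ {i}) hsubN hfeas hnotin
    linarith
  · have h1 : Sq Mmi ≤ Sq Mstar := hMstarOpt Mmi hMmiN hMmiFeas
    have h2 : Sq Mstar - Sq (Mstar \ {i})
        ≤ q / D * (a1 - a2 * Real.exp (a3 * q * (Mstar.card : ℝ) / D)) * b i := by
      rw [hSq Mstar, hSq (Mstar \ {i}), hcardR, hsum]
      set k := (Mstar.card : ℝ)
      have hbi : b i ≤ ∑ j ∈ Mstar, b j := Finset.single_le_sum (fun j _ => hb j) hi
      have hexp : Real.exp (a3 * q * (k - 1) / D) ≤ Real.exp (a3 * q * k / D) := by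
        apply Real.exp_le_exp.mpr
        apply div_le_div_of_nonneg_right _ hD.le
        nlinarith
      have hqD : 0 < q / D := div_pos hq hD
      nlinarith [mul_nonneg (mul_nonneg hc hq.le) (sub_nonneg.mpr hbi),
        mul_le_mul_of_nonneg_left hexp ha2.le,
        mul_nonneg hqD.le (mul_nonneg (mul_nonneg ha2.le
          (sub_nonneg.mpr hexp)) (sub_nonneg.mpr hbi)),
        mul_nonneg hc hq.le]
    linarith
end
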